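/- If T is a finite tree that is not a path, then the partition dimension of T is at most the number of leaves of T minus the number of exterior major vertices of T plus one, i.e., pd(T) ≤ n₁(T) − ex(T) + 1. -/

import Mathlib

open SimpleGraph

variable {V : Type*}

/-- Distance from a vertex to a set of vertices: `min_{u ∈ P} d(v,u)`. -/
noncomputable def distSet (G : SimpleGraph V) (v : V) (P : Set V) : ℕ :=
  sInf ((G.dist v) '' P)

/-- An ordered partition of `V` into `t` (nonempty) classes, encoded by a surjective
map `c : V → Fin t`, is resolving if distinct vertices have distinct partition
representations, i.e. distinct vectors of distances to the classes. -/
def IsResolvingPartition (G : SimpleGraph V) {t : ℕ} (c : V → Fin t) : Prop :=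
  Function.Surjective c ∧
    ∀ u v : V, (∀ i : Fin t, distSet G u {x | c x = i} = distSet G v {x | c x = i}) → u = v

/-- The partition dimension: the least `t` admitting a resolving partition into `t` classes. -/
noncomputable def partitionDim (G : SimpleGraph V) : ℕ :=
  sInf {t : ℕ | ∃ c : V → Fin t, IsResolvingPartition G c}

/-- A set `S` is a resolving set if distinct vertices have distinct vectors of
distances to the elements of `S`. -/
def IsResolvingSet (G : SimpleGraph V) (S : Set V) : Prop :=
  ∀ u v : V, (∀ w ∈ S, G.dist u w = G.dist v w) → u = v

/-- The metric dimension: the least cardinality of a resolving set. -/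
noncomputable def metricDim (G : SimpleGraph V) : ℕ :=
  sInf {k : ℕ | ∃ S : Set V, S.ncard = k ∧ IsResolvingSet G S}

/-- A leaf is a vertex of degree one. -/
def IsLeaf (G : SimpleGraph V) (v : V) : Prop := (G.neighborSet v).ncard = 1

/-- A major vertex is a vertex of degree at least three. -/
def IsMajor (G : SimpleGraph V) (v : V) : Prop := 3 ≤ (G.neighborSet v).ncard

/-- A path graph: a tree in which every vertex has degree at most two. -/
def IsPathGraph (G : SimpleGraph V) : Prop :=
  G.IsTree ∧ ∀ v : V, (G.neighborSet v).ncard ≤ 2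

/-- `u` is a terminal vertex of the major vertex `v` if `u` is a leaf and
`d(u,v) < d(u,w)` for every other major vertex `w`. -/
def IsTerminalOf (G : SimpleGraph V) (u v : V) : Prop :=
  IsLeaf G u ∧ IsMajor G v ∧ ∀ w : V, IsMajor G w → w ≠ v → G.dist u v < G.dist u w

/-- The terminal degree of a vertex: its number of terminal vertices. -/
noncomputable def terminalDegree (G : SimpleGraph V) (v : V) : ℕ :=
  {u | IsTerminalOf G u v}.ncard

/-- An exterior major vertex: a major vertex with positive terminal degree. -/
def IsExteriorMajor (G : SimpleGraph V) (v : V) : Prop :=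
  IsMajor G v ∧ 0 < terminalDegree G v

/-- `n₁(G)`: the number of leaves. -/
noncomputable def numLeaves (G : SimpleGraph V) : ℕ := {v | IsLeaf G v}.ncard

/-- `ex(G)`: the number of exterior major vertices. -/
noncomputable def numExteriorMajor (G : SimpleGraph V) : ℕ := {v | IsExteriorMajor G v}.ncard

/-- A support vertex: a vertex adjacent to a leaf. -/
def IsSupport (G : SimpleGraph V) (v : V) : Prop := ∃ u, G.Adj v u ∧ IsLeaf G u

/-- `ξ(G)`: the number of support vertices. -/
noncomputable def numSupport (G : SimpleGraph V) : ℕ := {v | IsSupport G v}.ncard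

/-- `θ(G)`: the maximum number of leaves adjacent to a single support vertex. -/
noncomputable def maxLeavesAtSupport (G : SimpleGraph V) : ℕ :=
  sSup {n : ℕ | ∃ v, IsSupport G v ∧ n = {u | G.Adj v u ∧ IsLeaf G u}.ncard}

/-!
For each exterior major vertex `x` choose a terminal leaf `r x`. The other leaves form a
resolving set `W`, so the singletons of `W` together with `V \ W`, which contains a major vertex,
form a resolving partition with `|W| + 1 = n₁ - ex + 1` classes.

In a tree every branch has more leaves than major vertices. Let `u ≠ v` have the same distances
to all of `W`, so that every leaf separating them is a chosen one. If all leaves separate them,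
there are at most as many leaves as major vertices. Otherwise `u` and `v` have a midpoint `m`, with
neighbours `a` towards `u` and `b` towards `v`; the leaves beyond `a` and beyond `b` all separate
`u` from `v`, so counting yields a chosen leaf beyond `b` whose major vertex is not beyond `b`, and
likewise for `a`. As the path from a terminal leaf to its major vertex meets no other major vertex,
both of these major vertices are `m`, which would then have two chosen leaves.
-/

namespace SimpleGraph

variable {G : SimpleGraph V} {a b c m w x y z : V}

/-- For adjacent `x` and `y` in a tree, `G.branch x y` is the vertex set of the component of
`G - x` containing `y`: the vertices whose geodesics from `x` start with the edge `xy`. -/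
def branch (G : SimpleGraph V) (x y : V) : Set V := {z | G.dist y z + 1 = G.dist x z}

theorem mem_branch : z ∈ G.branch x y ↔ G.dist y z + 1 = G.dist x z := Iff.rfl

theorem mem_branch_self (h : G.Adj x y) : y ∈ G.branch x y := by
  simp [mem_branch, dist_eq_one_iff_adj.mpr h]

theorem self_notMem_branch : x ∉ G.branch x y := by
  simp [mem_branch]

theorem disjoint_branch_swap : Disjoint (G.branch x y) (G.branch y x) :=
  Set.disjoint_left.mpr fun z hxy hyx => by rw [mem_branch] at hxy hyx; omega

theorem Connected.exists_adj_mem_branch (hG : G.Connected) (h : x ≠ z) :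
    ∃ y, G.Adj x y ∧ z ∈ G.branch x y := by
  obtain ⟨p, hp⟩ := hG.exists_walk_length_eq_dist x z
  have hnil : ¬ p.Nil := Walk.not_nil_of_ne h
  refine ⟨p.snd, p.adj_snd hnil, ?_⟩
  have h₁ := dist_le p.tail
  have h₂ := p.length_tail_add_one hnil
  have h₃ : G.dist x z ≤ G.dist x p.snd + G.dist p.snd z := hG.dist_triangle
  rw [dist_eq_one_iff_adj.mpr (p.adj_snd hnil)] at h₃
  rw [mem_branch]
  omega

theorem Connected.dist_add_dist_ne_of_mem_branch (hG : G.Connected) (hx : x ∈ G.branch m y)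
    (hz : z ∈ G.branch m y) : G.dist x m + G.dist m z ≠ G.dist x z := by
  have := hG.dist_triangle (u := x) (v := y) (w := z)
  rw [mem_branch] at hx hz
  simp only [dist_comm] at *
  omega

theorem IsTree.eq_of_mem_branch (hT : G.IsTree) {y₁ y₂ : V} (h₁ : G.Adj x y₁)
    (h₂ : G.Adj x y₂) (hz₁ : z ∈ G.branch x y₁) (hz₂ : z ∈ G.branch x y₂) :
    y₁ = y₂ := by
  classical
  obtain ⟨p, hp, -⟩ := hT.connected.exists_path_of_dist z x
  suffices ∀ y, G.Adj x y → z ∈ G.branch x y → y = p.penultimate from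
    (this y₁ h₁ hz₁).trans (this y₂ h₂ hz₂).symm
  intro y hxy hz
  obtain ⟨q, hq, hql⟩ := hT.connected.exists_path_of_dist z y
  have hx : x ∉ q.support := fun hx => by
    have := dist_le (q.takeUntil x hx)
    have := q.length_takeUntil_le_length hx
    rw [mem_branch] at hz
    simp only [dist_comm] at *
    omega
  exact hT.isAcyclic.eq_penultimate_of_adj_end hp hxy
    (hT.isAcyclic.mem_support_of_ne_mem_support_of_adj_of_isPath hp hq hxy hx)

theorem IsTree.exists_median (hT : G.IsTree) (a b c : V) : ∃ m,
    G.dist a m + G.dist m b = G.dist a b ∧ G.dist a m + G.dist m c = G.dist a c ∧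
      G.dist b m + G.dist m c = G.dist b c := by
  suffices ∀ n a, G.dist a b = n → ∃ m, G.dist a m + G.dist m b = G.dist a b ∧
      G.dist a m + G.dist m c = G.dist a c ∧ G.dist b m + G.dist m c = G.dist b c from
    this _ a rfl
  intro n
  induction n using Nat.strong_induction_on with
  | _ n ih =>
  intro a hn
  by_cases hab : a = b
  · subst hab
    exact ⟨a, by simp⟩
  have hG := hT.connected
  obtain ⟨a', haa', ha'⟩ := hG.exists_adj_mem_branch hab
  rw [mem_branch] at ha'
  obtain ⟨m, hm₁, hm₂, hm₃⟩ := ih _ (by omega) a' rfl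
  have h₁ := dist_eq_one_iff_adj.mpr haa'
  rcases hT.dist_eq_dist_add_one_of_adj c haa' with hac | hac
  · have := hG.dist_triangle (u := a) (v := a') (w := m)
    have := hG.dist_triangle (u := a) (v := m) (w := b)
    have := hG.dist_triangle (u := a) (v := m) (w := c)
    refine ⟨m, ?_, ?_, hm₃⟩ <;> simp only [dist_comm] at * <;> omega
  refine ⟨a, by simp, by simp, ?_⟩
  by_cases hma' : a' = m
  · subst hma'
    simp only [dist_comm] at *
    omega
  -- the step from `a'` towards `m` leads towards `c`, hence is `a`, which is not towards `b`
  obtain ⟨p, ha'p, hmp⟩ := hG.exists_adj_mem_branch hma'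
  rw [mem_branch] at hmp
  have hcp : c ∈ G.branch a' p := by
    have := hG.dist_triangle (u := p) (v := m) (w := c)
    have := hG.dist_triangle (u := a') (v := p) (w := c)
    rw [dist_eq_one_iff_adj.mpr ha'p] at this
    rw [mem_branch]
    simp only [dist_comm] at *
    omega
  have hca : c ∈ G.branch a' a := by
    rw [mem_branch]
    simp only [dist_comm] at *
    omega
  obtain rfl := hT.eq_of_mem_branch ha'p haa'.symm hcp hca
  have := hG.dist_triangle (u := p) (v := m) (w := b)
  simp only [dist_comm] at *
  omega

theorem IsTree.dist_eq_add_of_mem_branch (hT : G.IsTree) (hxy : G.Adj x y)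
    (hw : w ∉ G.branch x y) (hz : z ∈ G.branch x y) : G.dist w z = G.dist w x + G.dist x z := by
  obtain ⟨c, hc₁, hc₂, hc₃⟩ := hT.exists_median w z x
  by_cases hcx : x = c
  · subst hcx
    omega
  -- otherwise the step from `x` towards the median `c` leads towards both `w` and `z`
  obtain ⟨p, hxp, hcp⟩ := hT.connected.exists_adj_mem_branch hcx
  have hp := dist_eq_one_iff_adj.mpr hxp
  have key : ∀ v, G.dist v c + G.dist c x = G.dist v x → v ∈ G.branch x p := fun v hv => by
    have := hT.connected.dist_triangle (u := p) (v := c) (w := v)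
    have := hT.connected.dist_triangle (u := x) (v := p) (w := v)
    rw [mem_branch] at hcp ⊢
    simp only [dist_comm] at *
    omega
  exact (hw (hT.eq_of_mem_branch hxp hxy (key z hc₃) hz ▸ key w hc₂)).elim

theorem IsTree.branch_union_branch_swap (hT : G.IsTree) (h : G.Adj x y) :
    G.branch x y ∪ G.branch y x = Set.univ :=
  Set.eq_univ_of_forall fun z => by
    rcases hT.dist_eq_dist_add_one_of_adj z h with h' | h' <;>
    simp only [Set.mem_union, mem_branch, dist_comm (v := z)] <;> omega

theorem IsTree.pairwiseDisjoint_branch (hT : G.IsTree) (x : V) :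
    (G.neighborSet x).PairwiseDisjoint (G.branch x) :=
  fun _ h₁ _ h₂ hne => Set.disjoint_left.mpr fun _ hz₁ hz₂ =>
    hne (hT.eq_of_mem_branch h₁ h₂ hz₁ hz₂)

theorem IsTree.branch_subset_branch (hT : G.IsTree) (hwb : G.Adj w b) (hbc : G.Adj b c)
    (hcw : c ≠ w) : G.branch b c ⊆ G.branch w b := fun z hz => by
  have hw : w ∉ G.branch b c := fun hw => by
    rw [mem_branch, dist_eq_one_iff_adj.mpr hwb.symm] at hw
    exact hcw (hT.connected.dist_eq_zero_iff.mp (by omega))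
  rw [mem_branch, hT.dist_eq_add_of_mem_branch hbc hw hz, dist_eq_one_iff_adj.mpr hwb]
  omega

theorem IsTree.branch_eq_insert_biUnion (hT : G.IsTree) (hwb : G.Adj w b) :
    G.branch w b = insert b (⋃ c ∈ G.neighborSet b \ {w}, G.branch b c) := by
  refine subset_antisymm (fun z hz => ?_) (Set.insert_subset (mem_branch_self hwb) ?_)
  · obtain rfl | hbz := eq_or_ne b z
    · exact Set.mem_insert _ _
    obtain ⟨c, hbc, hzc⟩ := hT.connected.exists_adj_mem_branch hbz
    refine Set.mem_insert_of_mem _ (Set.mem_biUnion ⟨hbc, fun hcw => ?_⟩ hzc)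
    rw [Set.mem_singleton_iff.mp hcw, mem_branch] at hzc
    rw [mem_branch] at hz
    omega
  · exact Set.iUnion₂_subset fun c hc => hT.branch_subset_branch hwb hc.1 hc.2

end SimpleGraph

section

variable {G : SimpleGraph V} {a b c m w x y z : V}

theorem IsLeaf.eq_of_adj (hl : IsLeaf G z) (ha : G.Adj z a) (hb : G.Adj z b) : a = b := by
  obtain ⟨x, hx⟩ := Set.ncard_eq_one.mp hl
  have ha' : a ∈ G.neighborSet z := ha
  have hb' : b ∈ G.neighborSet z := hb
  rw [hx] at ha' hb'
  exact ha'.trans hb'.symm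

theorem IsLeaf.not_isMajor (hl : IsLeaf G z) : ¬ IsMajor G z := by
  unfold IsLeaf at hl
  unfold IsMajor
  omega

theorem isMajor_of_adj [Finite V] (ha : G.Adj m a) (hb : G.Adj m b) (hc : G.Adj m c)
    (hab : a ≠ b) (hac : a ≠ c) (hbc : b ≠ c) : IsMajor G m :=
  (Set.two_lt_ncard_iff).mpr ⟨a, b, c, ha, hb, hc, hab, hac, hbc⟩

theorem SimpleGraph.Connected.isMajor_of_median [Finite V] (hG : G.Connected)
    (hab : G.dist a m + G.dist m b = G.dist a b) (hac : G.dist a m + G.dist m c = G.dist a c)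
    (hbc : G.dist b m + G.dist m c = G.dist b c) (ha : m ≠ a) (hb : m ≠ b) (hc : m ≠ c) :
    IsMajor G m := by
  obtain ⟨a', ha', haa⟩ := hG.exists_adj_mem_branch ha
  obtain ⟨b', hb', hbb⟩ := hG.exists_adj_mem_branch hb
  obtain ⟨c', hc', hcc⟩ := hG.exists_adj_mem_branch hc
  refine isMajor_of_adj ha' hb' hc' ?_ ?_ ?_ <;> rintro rfl
  · exact hG.dist_add_dist_ne_of_mem_branch haa hbb hab
  · exact hG.dist_add_dist_ne_of_mem_branch haa hcc hac
  · exact hG.dist_add_dist_ne_of_mem_branch hbb hcc hbc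

theorem SimpleGraph.Connected.not_isLeaf_of_dist_add_dist_eq (hG : G.Connected)
    (h : G.dist x z + G.dist z y = G.dist x y) (hx : z ≠ x) (hy : z ≠ y) : ¬ IsLeaf G z := by
  intro hl
  obtain ⟨x', hx', hxx⟩ := hG.exists_adj_mem_branch hx
  obtain ⟨y', hy', hyy⟩ := hG.exists_adj_mem_branch hy
  exact hG.dist_add_dist_ne_of_mem_branch hxx (hl.eq_of_adj hy' hx' ▸ hyy) h

theorem SimpleGraph.IsTree.ncard_branch_inter [Fintype V] [DecidableEq V] [DecidableRel G.Adj]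
    (hT : G.IsTree) (hwb : G.Adj w b) (P : Set V) :
    (G.branch w b ∩ P).ncard =
      ({b} ∩ P).ncard + ∑ c ∈ (G.neighborFinset b).erase w, (G.branch b c ∩ P).ncard := by
  have hK : (((G.neighborFinset b).erase w : Finset V) : Set V) = G.neighborSet b \ {w} := by
    ext
    simp [and_comm]
  have hdisj : (((G.neighborFinset b).erase w : Finset V) : Set V).PairwiseDisjoint
      (fun c => G.branch b c ∩ P) :=
    ((hT.pairwiseDisjoint_branch b).subset (hK ▸ Set.sdiff_subset)).mono
      fun _ => Set.inter_subset_left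
  rw [hT.branch_eq_insert_biUnion hwb, Set.insert_eq, Set.union_inter_distrib_right,
    Set.iUnion₂_inter, ← hK, Set.ncard_union_eq,
    Set.Finite.ncard_biUnion (Finset.finite_toSet _) (fun _ _ => Set.toFinite _) hdisj,
    finsum_mem_coe_finset]
  refine Set.disjoint_left.mpr fun z hz hz' => ?_
  obtain ⟨c, -, hzc⟩ := Set.mem_iUnion₂.mp hz'
  exact self_notMem_branch ((Set.mem_singleton_iff.mp hz.1) ▸ hzc.1)

theorem SimpleGraph.IsTree.ncard_isMajor_add_one_le_ncard_isLeaf_branch [Finite V]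
    (hT : G.IsTree) (hwb : G.Adj w b) :
    (G.branch w b ∩ {z | IsMajor G z}).ncard + 1 ≤
      (G.branch w b ∩ {z | IsLeaf G z}).ncard := by
  classical
  have := Fintype.ofFinite V
  suffices ∀ n w b, G.Adj w b → (G.branch w b).ncard = n →
      (G.branch w b ∩ {z | IsMajor G z}).ncard + 1 ≤
        (G.branch w b ∩ {z | IsLeaf G z}).ncard from
    this _ w b hwb rfl
  intro n
  induction n using Nat.strong_induction_on with
  | _ n ih =>
  intro w b hwb hn
  have hchild : ∀ c ∈ (G.neighborFinset b).erase w,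
      (G.branch b c ∩ {z | IsMajor G z}).ncard + 1 ≤
        (G.branch b c ∩ {z | IsLeaf G z}).ncard := by
    intro c hc
    rw [Finset.mem_erase, mem_neighborFinset] at hc
    refine ih _ ?_ b c hc.2 rfl
    rw [← hn]
    exact Set.ncard_lt_ncard
      ((Set.ssubset_iff_of_subset (hT.branch_subset_branch hwb hc.2 hc.1)).mpr
        ⟨b, mem_branch_self hwb, self_notMem_branch⟩)
  have hsum := Finset.sum_le_sum hchild
  rw [Finset.sum_add_distrib, Finset.sum_const, smul_eq_mul, mul_one,
    Finset.card_erase_of_mem ((mem_neighborFinset _ _ _).mpr hwb.symm)] at hsum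
  have hdeg : (G.neighborSet b).ncard = (G.neighborFinset b).card := Set.ncard_eq_toFinset_card' _
  have hpos : 0 < (G.neighborFinset b).card :=
    Finset.card_pos.mpr ⟨w, (mem_neighborFinset _ _ _).mpr hwb.symm⟩
  have hb : ∀ P : V → Prop, ({b} ∩ {z | P z}).ncard = if P b then 1 else 0 := fun P => by
    split_ifs with h
    · rw [Set.singleton_inter_of_mem (s := {z | P z}) h, Set.ncard_singleton]
    · rw [Set.singleton_inter_eq_empty (s := {z | P z}) |>.mpr h, Set.ncard_empty]
  rw [hT.ncard_branch_inter hwb, hT.ncard_branch_inter hwb, hb, hb]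
  -- each of the `deg b - 1` child branches has a surplus leaf, which makes up for `b` itself
  split_ifs with hmaj hleaf hleaf <;> simp only [IsMajor, IsLeaf] at hmaj hleaf <;> omega

theorem SimpleGraph.IsTree.ncard_isMajor_add_two_le_ncard_isLeaf [Finite V] (hT : G.IsTree)
    (hab : G.Adj a b) : {z | IsMajor G z}.ncard + 2 ≤ {z | IsLeaf G z}.ncard := by
  have split : ∀ P : Set V, P.ncard = (G.branch a b ∩ P).ncard + (G.branch b a ∩ P).ncard :=
    fun P => by
      rw [← Set.ncard_union_eq (disjoint_branch_swap.mono Set.inter_subset_left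
        Set.inter_subset_left), ← Set.union_inter_distrib_right, hT.branch_union_branch_swap hab,
        Set.univ_inter]
  rw [split, split {z | IsLeaf G z}]
  have := hT.ncard_isMajor_add_one_le_ncard_isLeaf_branch hab
  have := hT.ncard_isMajor_add_one_le_ncard_isLeaf_branch hab.symm
  omega

theorem IsTerminalOf.not_isMajor_of_dist_lt {f x : V} (h : IsTerminalOf G f x)
    (hz : G.dist f z < G.dist f x) : ¬ IsMajor G z := fun hz' => by
  have := h.2.2 z hz' (by rintro rfl; omega)
  omega

theorem IsTerminalOf.eq_of_isTerminalOf {f x₁ x₂ : V} (h₁ : IsTerminalOf G f x₁)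
    (h₂ : IsTerminalOf G f x₂) : x₁ = x₂ := by
  by_contra hne
  have := h₁.2.2 x₂ h₂.2.1 (Ne.symm hne)
  have := h₂.2.2 x₁ h₁.2.1 hne
  omega

theorem SimpleGraph.IsTree.dist_lt_dist_of_notMem_branch (hT : G.IsTree) (hmb : G.Adj m b)
    (hz : z ∈ G.branch m b) (hx : x ∉ G.branch m b) (hxm : x ≠ m) :
    G.dist z m < G.dist z x := by
  have := hT.dist_eq_add_of_mem_branch hmb hx hz
  have := hT.connected.pos_dist_of_ne hxm
  rw [dist_comm (u := z), dist_comm (u := z)]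
  omega

theorem SimpleGraph.IsTree.dist_lt_dist_of_mem_branch (hT : G.IsTree) {u v : V} (hmb : G.Adj m b)
    (hu : u ∉ G.branch m b) (hv : v ∈ G.branch m b) (huv : G.dist v m ≤ G.dist u m)
    (hz : z ∈ G.branch m b) : G.dist v z < G.dist u z := by
  have := hT.dist_eq_add_of_mem_branch hmb hu hz
  have := hT.connected.dist_triangle (u := v) (v := b) (w := z)
  rw [mem_branch] at hv hz
  simp only [dist_comm] at *
  omega

theorem SimpleGraph.IsTree.not_isMajor_of_mem_branch [Finite V] (hT : G.IsTree) {f x : V}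
    (hf : IsTerminalOf G f x) (hfB : f ∈ G.branch m b) (hyB : y ∈ G.branch m b)
    (hfm : G.dist f m < G.dist f x) : ¬ IsMajor G y := by
  intro hy
  obtain ⟨c, h₁, h₂, h₃⟩ := hT.exists_median f m y
  have hcm : c ≠ m := by
    rintro rfl
    exact hT.connected.dist_add_dist_ne_of_mem_branch hfB hyB h₂
  have hc : ¬ IsMajor G c := hf.not_isMajor_of_dist_lt (by omega)
  have hcy : c ≠ y := by
    rintro rfl
    exact hc hy
  have hcf : c ≠ f := by
    rintro rfl
    exact hT.connected.not_isLeaf_of_dist_add_dist_eq h₃ (fun h => self_notMem_branch (h ▸ hfB))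
      hcy hf.1
  exact hc (hT.connected.isMajor_of_median h₁ h₂ h₃ hcf hcm hcy)

theorem SimpleGraph.IsTree.eq_of_isTerminalOf_of_mem_branch [Finite V] (hT : G.IsTree)
    {f g xf xg : V} (hma : G.Adj m a) (hmb : G.Adj m b) (hab : a ≠ b)
    (hf : IsTerminalOf G f xf) (hfB : f ∈ G.branch m b) (hxf : xf ∉ G.branch m b)
    (hg : IsTerminalOf G g xg) (hgA : g ∈ G.branch m a) (hxg : xg ∉ G.branch m a) :
    xf = m ∧ xg = m := by
  have hf' (h : xf ≠ m) : ¬ IsMajor G m :=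
    hf.not_isMajor_of_dist_lt (hT.dist_lt_dist_of_notMem_branch hmb hfB hxf h)
  have hg' (h : xg ≠ m) : ¬ IsMajor G m :=
    hg.not_isMajor_of_dist_lt (hT.dist_lt_dist_of_notMem_branch hma hgA hxg h)
  by_cases hxfm : xf = m
  · exact ⟨hxfm, by_contra fun h => hg' h (hxfm ▸ hf.2.1)⟩
  by_cases hxgm : xg = m
  · exact absurd (hxgm ▸ hg.2.1) (hf' hxfm)
  exfalso
  -- `m` has only the neighbours `a` and `b`, so `xg` lies in the branch of `f`
  obtain ⟨c, hmc, hxgc⟩ := hT.connected.exists_adj_mem_branch (Ne.symm hxgm)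
  obtain rfl : c = b := by
    by_contra hcb
    have hca : c ≠ a := by
      rintro rfl
      exact hxg hxgc
    exact hf' hxfm (isMajor_of_adj hma hmb hmc hab (Ne.symm hca) (Ne.symm hcb))
  exact hT.not_isMajor_of_mem_branch hf hfB hxgc (hT.dist_lt_dist_of_notMem_branch hmb hfB hxf hxfm)
    hg.2.1

theorem SimpleGraph.IsTree.exists_isExteriorMajor_notMem_branch [Finite V] (hT : G.IsTree)
    (hwb : G.Adj w b) {r : V → V}
    (hB : ∀ l ∈ G.branch w b, IsLeaf G l → l ∈ r '' {x | IsExteriorMajor G x}) :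
    ∃ x, IsExteriorMajor G x ∧ x ∉ G.branch w b ∧ r x ∈ G.branch w b := by
  by_contra! h
  have hsub : G.branch w b ∩ {z | IsLeaf G z} ⊆ r '' (G.branch w b ∩ {z | IsMajor G z}) := by
    rintro l ⟨hlB, hl⟩
    obtain ⟨x, hx, rfl⟩ := hB l hlB hl
    exact ⟨x, ⟨by_contra fun hxB => h x hx hxB hlB, hx.1⟩, rfl⟩
  have := (Set.ncard_le_ncard hsub).trans Set.ncard_image_le
  have := hT.ncard_isMajor_add_one_le_ncard_isLeaf_branch hwb
  omega

theorem SimpleGraph.IsTree.exists_adj_adj_forall_mem_branch_dist_lt (hT : G.IsTree) {u v l : V}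
    (huv : u ≠ v) (hl : G.dist u l = G.dist v l) :
    ∃ m a b, G.Adj m a ∧ G.Adj m b ∧ a ≠ b ∧
      (∀ z ∈ G.branch m a, G.dist u z < G.dist v z) ∧
      ∀ z ∈ G.branch m b, G.dist v z < G.dist u z := by
  obtain ⟨m, h₁, h₂, h₃⟩ := hT.exists_median u v l
  have hpos := hT.connected.pos_dist_of_ne huv
  have hum : G.dist u m = G.dist v m := by omega
  have hmu : m ≠ u := by
    rintro rfl
    simp only [dist_self, dist_comm] at *
    omega
  have hmv : m ≠ v := by
    rintro rfl
    simp only [dist_self, dist_comm] at *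
    omega
  obtain ⟨a, hma, hua⟩ := hT.connected.exists_adj_mem_branch hmu
  obtain ⟨b, hmb, hvb⟩ := hT.connected.exists_adj_mem_branch hmv
  have hva : v ∉ G.branch m a := fun hva =>
    hT.connected.dist_add_dist_ne_of_mem_branch hua hva h₁
  have hub : u ∉ G.branch m b := fun hub =>
    hT.connected.dist_add_dist_ne_of_mem_branch hub hvb h₁
  refine ⟨m, a, b, hma, hmb, ?_, fun z => hT.dist_lt_dist_of_mem_branch hma hva hua hum.le,
    fun z => hT.dist_lt_dist_of_mem_branch hmb hub hvb hum.ge⟩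
  rintro rfl
  exact hva hvb

theorem SimpleGraph.IsTree.isResolvingSet_leaves_diff_image [Finite V] (hT : G.IsTree)
    {r : V → V} (hr : ∀ x, IsExteriorMajor G x → IsTerminalOf G (r x) x) :
    IsResolvingSet G ({l | IsLeaf G l} \ r '' {x | IsExteriorMajor G x}) := by
  intro u v huv
  by_contra hne
  have hsep (l : V) (hl : IsLeaf G l) (hd : G.dist u l ≠ G.dist v l) :
      l ∈ r '' {x | IsExteriorMajor G x} :=
    by_contra fun h => hd (huv l ⟨hl, h⟩)
  by_cases hl : ∃ l, IsLeaf G l ∧ G.dist u l = G.dist v l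
  · obtain ⟨l, -, hl⟩ := hl
    obtain ⟨m, a, b, hma, hmb, hab, hA, hB⟩ :=
      hT.exists_adj_adj_forall_mem_branch_dist_lt hne hl
    obtain ⟨xf, hxf, hxfB, hfB⟩ := hT.exists_isExteriorMajor_notMem_branch hmb
      fun l hlB hl => hsep l hl (hB l hlB).ne'
    obtain ⟨xg, hxg, hxgA, hgA⟩ := hT.exists_isExteriorMajor_notMem_branch hma
      fun l hlA hl => hsep l hl (hA l hlA).ne
    obtain ⟨rfl, rfl⟩ := hT.eq_of_isTerminalOf_of_mem_branch hma hmb hab (hr xf hxf) hfB hxfB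
      (hr xg hxg) hgA hxgA
    exact lt_asymm (hA _ hgA) (hB _ hfB)
  · simp only [not_exists, not_and] at hl
    obtain ⟨w, huw, -⟩ := hT.connected.exists_adj_mem_branch hne
    have hsub : {z | IsLeaf G z} ⊆ r '' {z | IsMajor G z} := fun l hl' =>
      Set.image_mono (fun x hx => hx.1) (hsep l hl' (hl l hl'))
    have := (Set.ncard_le_ncard hsub).trans Set.ncard_image_le
    have := hT.ncard_isMajor_add_two_le_ncard_isLeaf huw
    omega

theorem distSet_singleton (G : SimpleGraph V) (v s : V) : distSet G v {s} = G.dist v s := by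
  rw [distSet, Set.image_singleton, csInf_singleton]

theorem partitionDim_le_ncard_add_one {S : Set V} (hS : S.Finite) (hres : IsResolvingSet G S)
    {v₀ : V} (hv₀ : v₀ ∉ S) : partitionDim G ≤ S.ncard + 1 := by
  classical
  have := hS.to_subtype
  let e : S ≃ Fin S.ncard := (Finite.equivFin S).trans (finCongr (Nat.card_coe_set_eq S))
  let c : V → Fin (S.ncard + 1) := fun z =>
    if hz : z ∈ S then (e ⟨z, hz⟩).castSucc else Fin.last _
  have hclass (s : V) (hs : s ∈ S) : {x | c x = c s} = {s} := by
    ext x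
    by_cases hx : x ∈ S
    · simp [c, hx, hs, Subtype.ext_iff]
    · simp only [c, hx, hs, Set.mem_ofPred_eq, Set.mem_singleton_iff, dite_true, dite_false]
      exact iff_of_false (Fin.castSucc_lt_last _).ne' fun h => hx (h ▸ hs)
  refine Nat.sInf_le ⟨c, fun i => ?_, fun u v h => hres u v fun s hs => ?_⟩
  · cases i using Fin.lastCases with
    | last => exact ⟨v₀, by simp [c, hv₀]⟩
    | cast j => exact ⟨e.symm j, by simp [c]⟩
  · simpa [hclass s hs, distSet_singleton] using h (c s)

theorem ncard_leaves_diff_image [Finite V] {r : V → V}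
    (hr : ∀ x, IsExteriorMajor G x → IsTerminalOf G (r x) x) :
    ({l | IsLeaf G l} \ r '' {x | IsExteriorMajor G x}).ncard =
      numLeaves G - numExteriorMajor G := by
  have hsub : r '' {x | IsExteriorMajor G x} ⊆ {l | IsLeaf G l} := by
    rintro _ ⟨x, hx, rfl⟩
    exact (hr x hx).1
  have hinj : Set.InjOn r {x | IsExteriorMajor G x} := fun x₁ h₁ x₂ h₂ h =>
    (hr x₁ h₁).eq_of_isTerminalOf (h ▸ hr x₂ h₂)
  rw [Set.ncard_sdiff hsub, hinj.ncard_image]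
  rfl

end

/-- For a tree that is not a path, `pd(T) ≤ n₁(T) - ex(T) + 1`. -/
theorem partitionDim_tree_le {V : Type*} [Fintype V] (G : SimpleGraph V)
    (hT : G.IsTree) (hnp : ¬ IsPathGraph G) :
    partitionDim G ≤ numLeaves G - numExteriorMajor G + 1 := by
  obtain ⟨v₀, hv₀⟩ : ∃ v, IsMajor G v := by
    by_contra! h
    exact hnp ⟨hT, fun v => by have := h v; unfold IsMajor at this; omega⟩
  have := hT.connected.nonempty
  choose! r hr using fun x (hx : IsExteriorMajor G x) => Set.nonempty_of_ncard_ne_zero hx.2.ne'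
  calc partitionDim G ≤ ({l | IsLeaf G l} \ r '' {x | IsExteriorMajor G x}).ncard + 1 :=
        partitionDim_le_ncard_add_one (Set.toFinite _) (hT.isResolvingSet_leaves_diff_image hr)
          fun h => h.1.not_isMajor hv₀
    _ = numLeaves G - numExteriorMajor G + 1 := by rw [ncard_leaves_diff_image hr]
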